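/- arXiv:2410.00887 — 2 statements merged into one kernel-verified Lean document; each statement's English description precedes it below -/
import Mathlib

section
/- If A ⊆ ℝ is comeager and B ⊆ ℝ is dense, then there is a Cantor set C ⊆ A ∪ B (a subset of A ∪ B homeomorphic to the Cantor space) such that B ∩ C is dense in C. -/
open Set Filter Topology

/-! Auxiliary construction: a Cantor scheme of closed intervals. A node of the binary
tree is represented by a `List Bool` (children obtained by *prepending* a bit).
Each node carries a center (a point of `B`) and a radius. The `false` child keeps the
center and shrinks the radius by 4; the `true` child moves into `U n` (an open dense set)
inside the right part of the parent interval. -/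

open Classical in
noncomputable def cantorStepAux (B : Set ℝ) (U : ℕ → Set ℝ) (p : ℝ × ℝ) (n : ℕ) : Bool → ℝ × ℝ
  | false => (p.1, p.2 / 4)
  | true =>
    if h : ∃ q : ℝ × ℝ, q.1 ∈ B ∧ 0 < q.2 ∧ q.2 ≤ p.2 / 4 ∧
        Icc (q.1 - q.2) (q.1 + q.2) ⊆ U n ∧
        Icc (q.1 - q.2) (q.1 + q.2) ⊆ Icc (p.1 + p.2 / 2) (p.1 + p.2)
    then h.choose else (p.1, p.2 / 4)

noncomputable def cantorNode (B : Set ℝ) (U : ℕ → Set ℝ) (c0 : ℝ) : List Bool → ℝ × ℝ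
  | [] => (c0, 1)
  | b :: s => cantorStepAux B U (cantorNode B U c0 s) s.length b

/-- The list of the first `n` values of `α`, most recent first. -/
def cantorBr (α : ℕ → Bool) : ℕ → List Bool
  | 0 => []
  | n + 1 => α n :: cantorBr α n

lemma cantorBr_length (α : ℕ → Bool) (n : ℕ) : (cantorBr α n).length = n := by
  induction n with
  | zero => rfl
  | succ n ih => simp [cantorBr, ih]

lemma cantorBr_congr {α β : ℕ → Bool} {n : ℕ} (h : ∀ i < n, α i = β i) :
    cantorBr α n = cantorBr β n := by
  induction n with
  | zero => rfl
  | succ n ih =>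
    simp only [cantorBr]
    exact congrArg₂ _ (h n (Nat.lt_succ_self n)) (ih fun i hi => h i (hi.trans (Nat.lt_succ_self n)))

section Construction

variable {B : Set ℝ} {U : ℕ → Set ℝ} {c0 : ℝ}
variable (hB : Dense B) (hU : ∀ n, IsOpen (U n)) (hUd : ∀ n, Dense (U n)) (hc0 : c0 ∈ B)

include hB hU hUd in
lemma cantorStep_exists {p : ℝ × ℝ} (hp : p.1 ∈ B) (hr : 0 < p.2) (n : ℕ) :
    ∃ q : ℝ × ℝ, q.1 ∈ B ∧ 0 < q.2 ∧ q.2 ≤ p.2 / 4 ∧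
        Icc (q.1 - q.2) (q.1 + q.2) ⊆ U n ∧
        Icc (q.1 - q.2) (q.1 + q.2) ⊆ Icc (p.1 + p.2 / 2) (p.1 + p.2) := by
  set c := p.1; set r := p.2
  have hVo : IsOpen (Ioo (c + r / 2) (c + r) ∩ U n) := isOpen_Ioo.inter (hU n)
  have hVne : (Ioo (c + r / 2) (c + r) ∩ U n).Nonempty :=
    (hUd n).inter_open_nonempty _ isOpen_Ioo (nonempty_Ioo.2 (by linarith))
  obtain ⟨c', hc'V, hc'B⟩ := hB.inter_open_nonempty _ hVo hVne
  obtain ⟨ε, hε, hball⟩ := Metric.isOpen_iff.1 hVo c' hc'V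
  refine ⟨(c', min (ε / 2) (r / 8)), hc'B, lt_min (by linarith) (by linarith),
    min_le_of_right_le (by linarith), ?_, ?_⟩
  · intro y hy
    have h1 : |y - c'| ≤ min (ε / 2) (r / 8) := by
      rw [abs_le]; constructor <;> [linarith [hy.1]; linarith [hy.2]]
    have : y ∈ Ioo (c + r / 2) (c + r) ∩ U n := by
      apply hball
      rw [Metric.mem_ball, Real.dist_eq]
      exact lt_of_le_of_lt h1 (lt_of_le_of_lt (min_le_left _ _) (by linarith))
    exact this.2
  · intro y hy
    have h1 : |y - c'| ≤ min (ε / 2) (r / 8) := by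
      rw [abs_le]; constructor <;> [linarith [hy.1]; linarith [hy.2]]
    have : y ∈ Ioo (c + r / 2) (c + r) ∩ U n := by
      apply hball
      rw [Metric.mem_ball, Real.dist_eq]
      exact lt_of_le_of_lt h1 (lt_of_le_of_lt (min_le_left _ _) (by linarith))
    exact ⟨le_of_lt this.1.1, le_of_lt this.1.2⟩

open Classical in
lemma cantorStep_true (B : Set ℝ) (U : ℕ → Set ℝ) (p : ℝ × ℝ) (n : ℕ) :
    cantorStepAux B U p n true =
      if h : ∃ q : ℝ × ℝ, q.1 ∈ B ∧ 0 < q.2 ∧ q.2 ≤ p.2 / 4 ∧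
          Icc (q.1 - q.2) (q.1 + q.2) ⊆ U n ∧
          Icc (q.1 - q.2) (q.1 + q.2) ⊆ Icc (p.1 + p.2 / 2) (p.1 + p.2)
      then h.choose else (p.1, p.2 / 4) := rfl

lemma cantorNode_true_eq (B : Set ℝ) (U : ℕ → Set ℝ) (c0 : ℝ) (s : List Bool) :
    cantorNode B U c0 (true :: s) =
      cantorStepAux B U (cantorNode B U c0 s) s.length true := rfl

lemma cantorNode_false (s : List Bool) :
    cantorNode B U c0 (false :: s) =
      ((cantorNode B U c0 s).1, (cantorNode B U c0 s).2 / 4) := rfl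

include hB hU hUd hc0 in
lemma cantorNode_mem (s : List Bool) :
    (cantorNode B U c0 s).1 ∈ B ∧ 0 < (cantorNode B U c0 s).2 := by
  induction s with
  | nil => exact ⟨hc0, one_pos⟩
  | cons b s ih =>
    cases b with
    | false =>
      rw [cantorNode_false]
      exact ⟨ih.1, by have := ih.2; positivity⟩
    | true =>
      have hex := cantorStep_exists hB hU hUd ih.1 ih.2 s.length
      rw [cantorNode_true_eq, cantorStep_true, dif_pos hex]
      exact ⟨hex.choose_spec.1, hex.choose_spec.2.1⟩

include hB hU hUd hc0 in
lemma cantorNode_true (s : List Bool) :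
    (cantorNode B U c0 (true :: s)).2 ≤ (cantorNode B U c0 s).2 / 4 ∧
    Icc ((cantorNode B U c0 (true :: s)).1 - (cantorNode B U c0 (true :: s)).2)
        ((cantorNode B U c0 (true :: s)).1 + (cantorNode B U c0 (true :: s)).2) ⊆
      U s.length ∧
    Icc ((cantorNode B U c0 (true :: s)).1 - (cantorNode B U c0 (true :: s)).2)
        ((cantorNode B U c0 (true :: s)).1 + (cantorNode B U c0 (true :: s)).2) ⊆
      Icc ((cantorNode B U c0 s).1 + (cantorNode B U c0 s).2 / 2)
          ((cantorNode B U c0 s).1 + (cantorNode B U c0 s).2) := by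
  obtain ⟨hm, hr⟩ := cantorNode_mem hB hU hUd hc0 s
  have hex := cantorStep_exists hB hU hUd hm hr s.length
  rw [cantorNode_true_eq, cantorStep_true, dif_pos hex]
  exact ⟨hex.choose_spec.2.2.1, hex.choose_spec.2.2.2.1, hex.choose_spec.2.2.2.2⟩

include hB hU hUd hc0 in
lemma cantorNode_radius (b : Bool) (s : List Bool) :
    (cantorNode B U c0 (b :: s)).2 ≤ (cantorNode B U c0 s).2 / 4 := by
  cases b with
  | false => rw [cantorNode_false]
  | true => exact (cantorNode_true hB hU hUd hc0 s).1

include hB hU hUd hc0 in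
lemma cantorNode_nested (b : Bool) (s : List Bool) :
    Icc ((cantorNode B U c0 (b :: s)).1 - (cantorNode B U c0 (b :: s)).2)
        ((cantorNode B U c0 (b :: s)).1 + (cantorNode B U c0 (b :: s)).2) ⊆
      Icc ((cantorNode B U c0 s).1 - (cantorNode B U c0 s).2)
          ((cantorNode B U c0 s).1 + (cantorNode B U c0 s).2) := by
  obtain ⟨_, hr⟩ := cantorNode_mem hB hU hUd hc0 s
  cases b with
  | false =>
    rw [cantorNode_false]
    exact Icc_subset_Icc (by dsimp; linarith) (by dsimp; linarith)
  | true =>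
    refine ((cantorNode_true hB hU hUd hc0 s).2.2).trans
      (Icc_subset_Icc (by linarith) le_rfl)

/-- Left endpoints along a branch. -/
noncomputable def cantorA (B : Set ℝ) (U : ℕ → Set ℝ) (c0 : ℝ) (α : ℕ → Bool) (n : ℕ) : ℝ :=
  (cantorNode B U c0 (cantorBr α n)).1 - (cantorNode B U c0 (cantorBr α n)).2

noncomputable def cantorBp (B : Set ℝ) (U : ℕ → Set ℝ) (c0 : ℝ) (α : ℕ → Bool) (n : ℕ) : ℝ :=
  (cantorNode B U c0 (cantorBr α n)).1 + (cantorNode B U c0 (cantorBr α n)).2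

/-- The point of the Cantor set corresponding to a branch `α`. -/
noncomputable def cantorX (B : Set ℝ) (U : ℕ → Set ℝ) (c0 : ℝ) (α : ℕ → Bool) : ℝ :=
  ⨆ n, cantorA B U c0 α n

include hB hU hUd hc0 in
lemma cantorAB_mono (α : ℕ → Bool) {m n : ℕ} (h : m ≤ n) :
    Icc (cantorA B U c0 α n) (cantorBp B U c0 α n) ⊆
      Icc (cantorA B U c0 α m) (cantorBp B U c0 α m) := by
  induction n with
  | zero => simp_all
  | succ n ih =>
    rcases Nat.lt_or_ge m (n + 1) with h' | h'
    · exact (cantorNode_nested hB hU hUd hc0 (α n) (cantorBr α n)).trans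
        (ih (Nat.lt_succ_iff.1 h'))
    · have : m = n + 1 := le_antisymm h h'
      subst this; exact subset_rfl

include hB hU hUd hc0 in
lemma cantorA_le_Bp (α : ℕ → Bool) (n : ℕ) : cantorA B U c0 α n ≤ cantorBp B U c0 α n := by
  have := (cantorNode_mem hB hU hUd hc0 (cantorBr α n)).2
  unfold cantorA cantorBp; linarith

include hB hU hUd hc0 in
lemma cantorX_mem (α : ℕ → Bool) (n : ℕ) :
    cantorX B U c0 α ∈ Icc (cantorA B U c0 α n) (cantorBp B U c0 α n) := by
  have key : ∀ m k : ℕ, cantorA B U c0 α m ≤ cantorBp B U c0 α k := by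
    intro m k
    rcases le_total m k with h | h
    · exact le_trans ((cantorAB_mono hB hU hUd hc0 α h
        ⟨le_refl _, cantorA_le_Bp hB hU hUd hc0 α k⟩).1)
        (cantorA_le_Bp hB hU hUd hc0 α k)
    · exact (cantorAB_mono hB hU hUd hc0 α h
        ⟨le_refl _, cantorA_le_Bp hB hU hUd hc0 α m⟩).2
  have hbdd : BddAbove (Set.range fun m => cantorA B U c0 α m) :=
    ⟨cantorBp B U c0 α n, by rintro x ⟨m, rfl⟩; exact key m n⟩
  constructor
  · exact le_ciSup hbdd n
  · exact ciSup_le fun m => key m n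

include hB hU hUd hc0 in
lemma cantorR_le (α : ℕ → Bool) (n : ℕ) :
    (cantorNode B U c0 (cantorBr α n)).2 ≤ (1 / 4 : ℝ) ^ n := by
  induction n with
  | zero => simp [cantorBr, cantorNode]
  | succ n ih =>
    have h1 := cantorNode_radius hB hU hUd hc0 (α n) (cantorBr α n)
    have : (cantorNode B U c0 (cantorBr α (n + 1))).2
        ≤ (cantorNode B U c0 (cantorBr α n)).2 / 4 := h1
    calc (cantorNode B U c0 (cantorBr α (n + 1))).2
        ≤ (cantorNode B U c0 (cantorBr α n)).2 / 4 := h1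
      _ ≤ (1 / 4 : ℝ) ^ n / 4 := by linarith
      _ = (1 / 4 : ℝ) ^ (n + 1) := by ring

include hB hU hUd hc0 in
lemma cantorX_dist (α β : ℕ → Bool) (n : ℕ) (h : ∀ i < n, α i = β i) :
    dist (cantorX B U c0 α) (cantorX B U c0 β) ≤ 2 * (1 / 4 : ℝ) ^ n := by
  have hbr : cantorBr α n = cantorBr β n := cantorBr_congr h
  have h1 := cantorX_mem hB hU hUd hc0 α n
  have h2 := cantorX_mem hB hU hUd hc0 β n
  rw [show cantorA B U c0 β n = cantorA B U c0 α n by unfold cantorA; rw [hbr],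
    show cantorBp B U c0 β n = cantorBp B U c0 α n by unfold cantorBp; rw [hbr]] at h2
  have := Real.dist_le_of_mem_Icc h1 h2
  have hr := cantorR_le hB hU hUd hc0 α n
  unfold cantorA cantorBp at this
  calc dist (cantorX B U c0 α) (cantorX B U c0 β) ≤ _ := this
    _ ≤ 2 * (1 / 4 : ℝ) ^ n := by linarith

include hB hU hUd hc0 in
lemma cantorX_continuous : Continuous (cantorX B U c0) := by
  rw [continuous_iff_continuousAt]
  intro α
  rw [ContinuousAt, Metric.tendsto_nhds]
  intro ε hε
  obtain ⟨n, hn⟩ : ∃ n : ℕ, (1 / 4 : ℝ) ^ n < ε / 2 :=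
    exists_pow_lt_of_lt_one (by linarith) (by norm_num)
  have hVo : IsOpen {β : ℕ → Bool | ∀ i ∈ Finset.range n, β i = α i} := by
    have : {β : ℕ → Bool | ∀ i ∈ Finset.range n, β i = α i}
        = ⋂ i ∈ Finset.range n, (fun β : ℕ → Bool => β i) ⁻¹' {α i} := by
      ext β; simp
    rw [this]
    exact isOpen_biInter_finset fun i _ => (continuous_apply i).isOpen_preimage _ trivial
  filter_upwards [hVo.mem_nhds (fun i _ => rfl)] with β hβ
  have := cantorX_dist hB hU hUd hc0 β α n fun i hi => hβ i (Finset.mem_range.2 hi)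
  calc dist (cantorX B U c0 β) (cantorX B U c0 α) ≤ 2 * (1 / 4 : ℝ) ^ n := this
    _ < ε := by linarith

include hB hU hUd hc0 in
lemma cantorX_eventually_false {α : ℕ → Bool} {m : ℕ} (h : ∀ k, m ≤ k → α k = false) :
    cantorX B U c0 α = (cantorNode B U c0 (cantorBr α m)).1 := by
  have hc : ∀ n, m ≤ n →
      (cantorNode B U c0 (cantorBr α n)).1 = (cantorNode B U c0 (cantorBr α m)).1 := by
    intro n hn
    induction n with
    | zero => simp_all
    | succ n ih =>
      rcases Nat.lt_or_ge m (n + 1) with h' | h'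
      · have hmn := Nat.lt_succ_iff.1 h'
        have : cantorBr α (n + 1) = false :: cantorBr α n := by
          rw [show cantorBr α (n + 1) = α n :: cantorBr α n from rfl, h n hmn]
        rw [this, cantorNode_false]
        exact ih hmn
      · have : m = n + 1 := le_antisymm hn h'
        subst this; rfl
  have key : ∀ n, m ≤ n →
      |cantorX B U c0 α - (cantorNode B U c0 (cantorBr α m)).1| ≤ (1 / 4 : ℝ) ^ n := by
    intro n hn
    have hmem := cantorX_mem hB hU hUd hc0 α n
    have hr := cantorR_le hB hU hUd hc0 α n
    unfold cantorA cantorBp at hmem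
    rw [hc n hn] at hmem
    rw [abs_le]
    constructor <;> [linarith [hmem.1]; linarith [hmem.2]]
  have htend : Tendsto (fun n : ℕ => (1 / 4 : ℝ) ^ n) atTop (𝓝 0) :=
    tendsto_pow_atTop_nhds_zero_of_lt_one (by norm_num) (by norm_num)
  have h0 : |cantorX B U c0 α - (cantorNode B U c0 (cantorBr α m)).1| ≤ 0 :=
    ge_of_tendsto htend (eventually_atTop.2 ⟨m, fun n hn => key n hn⟩)
  have := abs_nonneg (cantorX B U c0 α - (cantorNode B U c0 (cantorBr α m)).1)
  have : |cantorX B U c0 α - (cantorNode B U c0 (cantorBr α m)).1| = 0 := le_antisymm h0 this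
  rw [abs_eq_zero, sub_eq_zero] at this
  exact this

include hB hU hUd hc0 in
lemma cantorX_injective : Function.Injective (cantorX B U c0) := by
  intro α β hxy
  by_contra hne
  have hd : ∃ n, α n ≠ β n := by
    by_contra h; push_neg at h; exact hne (funext h)
  classical
  set n := Nat.find hd with hn
  have hne_n : α n ≠ β n := Nat.find_spec hd
  have hagree : ∀ i < n, α i = β i := fun i hi => by
    by_contra h; exact Nat.find_min hd hi h
  have hbr : cantorBr α n = cantorBr β n := cantorBr_congr hagree
  set s := cantorBr α n with hs
  obtain ⟨_, hrpos⟩ := cantorNode_mem hB hU hUd hc0 s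
  -- x α ∈ interval of (α n :: s), x β ∈ interval of (β n :: s), and these are disjoint
  have hmemα : cantorX B U c0 α ∈
      Icc ((cantorNode B U c0 (α n :: s)).1 - (cantorNode B U c0 (α n :: s)).2)
          ((cantorNode B U c0 (α n :: s)).1 + (cantorNode B U c0 (α n :: s)).2) := by
    have := cantorX_mem hB hU hUd hc0 α (n + 1)
    unfold cantorA cantorBp at this
    exact this
  have hmemβ : cantorX B U c0 β ∈
      Icc ((cantorNode B U c0 (β n :: s)).1 - (cantorNode B U c0 (β n :: s)).2)
          ((cantorNode B U c0 (β n :: s)).1 + (cantorNode B U c0 (β n :: s)).2) := by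
    have := cantorX_mem hB hU hUd hc0 β (n + 1)
    unfold cantorA cantorBp at this
    rw [show cantorBr β (n+1) = β n :: cantorBr β n from rfl, ← hbr] at this
    exact this
  have hfalse : ∀ y, y ∈
      Icc ((cantorNode B U c0 (false :: s)).1 - (cantorNode B U c0 (false :: s)).2)
          ((cantorNode B U c0 (false :: s)).1 + (cantorNode B U c0 (false :: s)).2) →
      y ≤ (cantorNode B U c0 s).1 + (cantorNode B U c0 s).2 / 4 := by
    intro y hy; rw [cantorNode_false] at hy; exact hy.2
  have htrue : ∀ y, y ∈
      Icc ((cantorNode B U c0 (true :: s)).1 - (cantorNode B U c0 (true :: s)).2)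
          ((cantorNode B U c0 (true :: s)).1 + (cantorNode B U c0 (true :: s)).2) →
      (cantorNode B U c0 s).1 + (cantorNode B U c0 s).2 / 2 ≤ y := by
    intro y hy
    exact (((cantorNode_true hB hU hUd hc0 s).2.2) hy).1
  cases hα : α n <;> cases hβ : β n
  · exact hne_n (hα.trans hβ.symm)
  · rw [hα] at hmemα; rw [hβ] at hmemβ
    have h1 := hfalse _ hmemα
    have h2 := htrue _ hmemβ
    rw [hxy] at h1
    linarith
  · rw [hα] at hmemα; rw [hβ] at hmemβ
    have h1 := htrue _ hmemα
    have h2 := hfalse _ hmemβ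
    rw [hxy] at h1
    linarith
  · exact hne_n (hα.trans hβ.symm)

end Construction

/-- If `A ⊆ ℝ` is comeager and `B ⊆ ℝ` is dense, then there is a Cantor set `C ⊆ A ∪ B`
(a subset of `A ∪ B` homeomorphic to the Cantor space) such that `B ∩ C` is dense in `C`. -/
theorem exists_cantor_subset_of_comeager_union_dense
    (A B : Set ℝ) (hA : IsMeagre Aᶜ) (hB : Dense B) :
    ∃ C : Set ℝ, C ⊆ A ∪ B ∧ Nonempty (C ≃ₜ (ℕ → Bool)) ∧
      C ⊆ closure (B ∩ C) := by
  classical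
  have hA' : A ∈ residual ℝ := by rwa [IsMeagre, compl_compl] at hA
  obtain ⟨t, hts, htG, htd⟩ := mem_residual.1 hA'
  obtain ⟨g, hgo, htg⟩ := isGδ_iff_eq_iInter_nat.1 htG
  set U : ℕ → Set ℝ := fun n => ⋂ k ∈ Finset.range (n + 1), g k with hUdef
  have hU : ∀ n, IsOpen (U n) := fun n => isOpen_biInter_finset fun k _ => hgo k
  have hUd : ∀ n, Dense (U n) := by
    intro n
    refine htd.mono ?_
    rw [htg]
    exact fun x hx => mem_iInter₂.2 fun k _ => mem_iInter.1 hx k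
  obtain ⟨c0, hc0⟩ := hB.nonempty
  set x := cantorX B U c0 with hx
  refine ⟨Set.range x, ?_, ?_, ?_⟩
  · -- range x ⊆ A ∪ B
    rintro _ ⟨α, rfl⟩
    by_cases hev : ∃ m, ∀ k, m ≤ k → α k = false
    · obtain ⟨m, hm⟩ := hev
      right
      rw [hx, cantorX_eventually_false hB hU hUd hc0 hm]
      exact (cantorNode_mem hB hU hUd hc0 (cantorBr α m)).1
    · left
      push_neg at hev
      apply hts
      rw [htg, mem_iInter]
      intro k
      obtain ⟨n, hkn, hn⟩ := hev k
      have hn' : α n = true := by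
        cases h : α n
        · exact absurd h hn
        · rfl
      have hmem : x α ∈ U n := by
        have h1 := cantorX_mem hB hU hUd hc0 α (n + 1)
        unfold cantorA cantorBp at h1
        rw [show cantorBr α (n + 1) = α n :: cantorBr α n from rfl, hn'] at h1
        have h2 := (cantorNode_true hB hU hUd hc0 (cantorBr α n)).2.1
        rw [cantorBr_length] at h2
        exact h2 h1
      have : x α ∈ g k := by
        have := mem_iInter₂.1 hmem k (Finset.mem_range.2 (Nat.lt_succ_of_le hkn))
        exact this
      exact this
  · -- homeomorphism
    have hcont : Continuous x := cantorX_continuous hB hU hUd hc0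
    have hinj : Function.Injective x := cantorX_injective hB hU hUd hc0
    let e : (ℕ → Bool) ≃ Set.range x := Equiv.ofInjective x hinj
    have hecont : Continuous e := Continuous.subtype_mk hcont _
    exact ⟨(hecont.homeoOfEquivCompactToT2).symm⟩
  · -- density of B ∩ C in C
    rintro _ ⟨α, rfl⟩
    rw [Metric.mem_closure_iff]
    intro ε hε
    obtain ⟨n, hn⟩ : ∃ n : ℕ, (1 / 4 : ℝ) ^ n < ε / 2 :=
      exists_pow_lt_of_lt_one (by linarith) (by norm_num)
    set β : ℕ → Bool := fun i => if i < n then α i else false with hβ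
    have hev : ∀ k, n ≤ k → β k = false := fun k hk => by
      simp only [hβ]; rw [if_neg (by omega)]
    have hagree : ∀ i < n, α i = β i := fun i hi => by
      simp only [hβ]; rw [if_pos hi]
    have hxβ : x β ∈ B := by
      rw [hx, cantorX_eventually_false hB hU hUd hc0 hev]
      exact (cantorNode_mem hB hU hUd hc0 (cantorBr β n)).1
    refine ⟨x β, ⟨hxβ, mem_range_self β⟩, ?_⟩
    have := cantorX_dist hB hU hUd hc0 α β n hagree
    calc dist (x α) (x β) ≤ 2 * (1 / 4 : ℝ) ^ n := this
      _ < ε := by linarith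
end

section
/- Suppose A ⊆ ℝ has the Baire property. Then A is meager if and only if for every nonempty open U ⊆ ℝ there is a countable dense subset B of U such that there is no Cantor set C ⊆ A ∪ B with B ∩ C dense in C. -/
open Set Topology Filter

lemma step_exists {U : Set ℝ} (hU : IsOpen U) {B : Set ℝ} (hBd : U ⊆ closure B)
    {F : ℕ → Set ℝ} (hFc : ∀ n, IsClosed (F n)) (hFi : ∀ n, interior (F n) = ∅)
    {a b p : ℝ} (hsub : Ioo a b ⊆ U) (hpB : p ∈ B) (hpa : a < p) (hpb : p < b)
    (n : ℕ) {ε : ℝ} (hε : 0 < ε) :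
    ∃ a0 b0 a1 b1 p1 : ℝ, a < a0 ∧ a0 < p ∧ p < b0 ∧ b0 < a1 ∧ a1 < b1 ∧ b1 < b ∧
      b0 - a0 ≤ ε ∧ b1 - a1 ≤ ε ∧ (∀ k ≤ n, Icc a1 b1 ∩ F k = ∅) ∧
      p1 ∈ B ∧ a1 < p1 ∧ p1 < b1 := by
  -- left interval around p
  set a0 : ℝ := max ((a+p)/2) (p - ε/4) with ha0
  set b0 : ℝ := min ((p+b)/2) (p + ε/4) with hb0
  have haa0 : a < a0 := lt_max_of_lt_left (by linarith)
  have ha0p : a0 < p := max_lt (by linarith) (by linarith)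
  have hpb0 : p < b0 := lt_min (by linarith) (by linarith)
  have hb0b : b0 < b := min_lt_of_left_lt (by linarith)
  have hlen0 : b0 - a0 ≤ ε := by
    have h1 : b0 ≤ p + ε/4 := min_le_right _ _
    have h2 : p - ε/4 ≤ a0 := le_max_right _ _
    linarith
  -- dense open complement of finitely many F k
  have hdense : Dense (⋂ k : Fin (n+1), (F k)ᶜ) := by
    apply dense_iInter_of_isOpen
    · exact fun k => (hFc k).isOpen_compl
    · intro k
      rw [← interior_eq_empty_iff_dense_compl]
      exact hFi k
  obtain ⟨q, hq1, hq2⟩ := hdense.inter_open_nonempty (Ioo b0 b) isOpen_Ioo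
    (nonempty_Ioo.mpr hb0b)
  have hqopen : IsOpen (Ioo b0 b ∩ ⋂ k : Fin (n+1), (F k)ᶜ) := by
    refine isOpen_Ioo.inter (isOpen_iInter_of_finite fun k => (hFc k).isOpen_compl)
  obtain ⟨r, hr, hball⟩ := Metric.isOpen_iff.mp hqopen q ⟨hq1, hq2⟩
  set t : ℝ := min (r/2) (ε/2) with ht
  have ht0 : 0 < t := lt_min (by linarith) (by linarith)
  have hIccW : Icc (q - t/2) (q + t/2) ⊆ Ioo b0 b ∩ ⋂ k : Fin (n+1), (F k)ᶜ := by
    intro y hy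
    apply hball
    rw [Metric.mem_ball, Real.dist_eq, abs_sub_lt_iff]
    have h1 : t ≤ r/2 := min_le_left _ _
    constructor <;> [skip; skip] <;> rcases hy with ⟨hy1, hy2⟩ <;> linarith
  have hsubIoo : Ioo (q - t/2) (q + t/2) ⊆ U := by
    intro y hy
    have := hIccW (Ioo_subset_Icc_self hy)
    exact hsub ⟨lt_trans (lt_trans haa0 ha0p) (lt_trans hpb0 this.1.1), this.1.2⟩
  have hne : q - t/2 < q + t/2 := by linarith
  obtain ⟨x, hx⟩ := nonempty_Ioo.mpr hne
  have hxcl : x ∈ closure B := hBd (hsubIoo hx)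
  obtain ⟨p1, hp1I, hp1B⟩ := _root_.mem_closure_iff.mp hxcl _ isOpen_Ioo hx
  have hqb0 : b0 < q - t/2 := by
    have := (hIccW (left_mem_Icc.mpr (by linarith))).1.1; exact this
  have hqb : q + t/2 < b := (hIccW (right_mem_Icc.mpr (by linarith))).1.2
  refine ⟨a0, b0, q - t/2, q + t/2, p1, haa0, ha0p, hpb0, hqb0, hne, hqb, hlen0, by have := min_le_right (r/2) (ε/2); linarith, ?_, hp1B, hp1I.1, hp1I.2⟩
  intro k hk
  rw [eq_empty_iff_forall_notMem]
  rintro y ⟨hy1, hy2⟩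
  have := (hIccW hy1).2
  rw [mem_iInter] at this
  exact this ⟨k, Nat.lt_succ_of_le hk⟩ hy2

structure CantorNode where
  a : ℝ
  b : ℝ
  p : ℝ

noncomputable instance : Inhabited CantorNode := ⟨⟨0, 1, 1/2⟩⟩

def CantorNode.Good (U B : Set ℝ) (v : CantorNode) : Prop :=
  Set.Ioo v.a v.b ⊆ U ∧ v.p ∈ B ∧ v.a < v.p ∧ v.p < v.b

def CantorNode.Concl (B : Set ℝ) (F : ℕ → Set ℝ) (v : CantorNode) (n : ℕ)
    (l r : CantorNode) : Prop :=
  l.p = v.p ∧ v.a < l.a ∧ l.a < v.p ∧ v.p < l.b ∧ l.b < r.a ∧ r.a < r.b ∧ r.b < v.b ∧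
  l.b - l.a ≤ (1/2)^(n+1) ∧ r.b - r.a ≤ (1/2)^(n+1) ∧
  (∀ k ≤ n, Set.Icc r.a r.b ∩ F k = ∅) ∧ r.p ∈ B ∧ r.a < r.p ∧ r.p < r.b

lemma cantor_step (U B : Set ℝ) (F : ℕ → Set ℝ) (v : CantorNode) (n : ℕ) :
    ∃ o : CantorNode × CantorNode,
      (IsOpen U ∧ U ⊆ closure B ∧ (∀ m, IsClosed (F m)) ∧ (∀ m, interior (F m) = ∅) ∧
        v.Good U B) → v.Concl B F n o.1 o.2 := by
  by_cases h : IsOpen U ∧ U ⊆ closure B ∧ (∀ m, IsClosed (F m)) ∧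
      (∀ m, interior (F m) = ∅) ∧ v.Good U B
  · obtain ⟨hUo, hBd, hFc, hFi, hsub, hpB, hpa, hpb⟩ := h
    obtain ⟨a0, b0, a1, b1, p1, h1, h2, h3, h4, h5, h6, h7, h8, h9, h10, h11, h12⟩ :=
      step_exists hUo hBd hFc hFi hsub hpB hpa hpb n (ε := (1/2)^(n+1)) (by positivity)
    exact ⟨(⟨a0, b0, v.p⟩, ⟨a1, b1, p1⟩), fun _ =>
      ⟨rfl, h1, h2, h3, h4, h5, h6, h7, h8, h9, h10, h11, h12⟩⟩
  · exact ⟨default, fun hg => absurd hg h⟩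

noncomputable def cantorChild (U B : Set ℝ) (F : ℕ → Set ℝ) (v : CantorNode) (n : ℕ) :
    CantorNode × CantorNode := Classical.choose (cantor_step U B F v n)

noncomputable def cantorTree (U B : Set ℝ) (F : ℕ → Set ℝ) (root : CantorNode) :
    List Bool → CantorNode
  | [] => root
  | (i :: s) =>
      if i then (cantorChild U B F (cantorTree U B F root s) s.length).2
      else (cantorChild U B F (cantorTree U B F root s) s.length).1

def preList (x : ℕ → Bool) : ℕ → List Bool
  | 0 => []
  | (n+1) => x n :: preList x n

@[simp] lemma preList_length (x : ℕ → Bool) (n : ℕ) : (preList x n).length = n := by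
  induction n with
  | zero => rfl
  | succ n ih => simp [preList, ih]

section

variable {U B : Set ℝ} {F : ℕ → Set ℝ} (hUo : IsOpen U) (hBd : U ⊆ closure B)
  (hFc : ∀ m, IsClosed (F m)) (hFi : ∀ m, interior (F m) = ∅)
  {root : CantorNode} (hroot : root.Good U B) (hrootlen : root.b - root.a ≤ 1)

include hUo hBd hFc hFi hroot hrootlen in
lemma cantorTree_good : ∀ s : List Bool,
    (cantorTree U B F root s).Good U B ∧
    (cantorTree U B F root s).b - (cantorTree U B F root s).a ≤ (1/2) ^ s.length := by
  have key : ∀ s : List Bool, (cantorTree U B F root s).Good U B →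
      (cantorTree U B F root s).Concl B F s.length
        (cantorChild U B F (cantorTree U B F root s) s.length).1
        (cantorChild U B F (cantorTree U B F root s) s.length).2 := by
    intro s hg
    exact Classical.choose_spec (cantor_step U B F (cantorTree U B F root s) s.length)
      ⟨hUo, hBd, hFc, hFi, hg⟩
  intro s
  induction s with
  | nil => exact ⟨hroot, by simpa [cantorTree] using hrootlen⟩
  | cons i s ih =>
    obtain ⟨hg, _⟩ := ih
    obtain ⟨hcp, hc1, hc2, hc3, hc4, hc5, hc6, hc7, hc8, hc9, hc10, hc11, hc12⟩ := key s hg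
    obtain ⟨hsubU, hpB, hpa, hpb⟩ := hg
    have hL : cantorTree U B F root (false :: s)
        = (cantorChild U B F (cantorTree U B F root s) s.length).1 := by
      simp [cantorTree]
    have hR : cantorTree U B F root (true :: s)
        = (cantorChild U B F (cantorTree U B F root s) s.length).2 := by
      simp [cantorTree]
    cases i with
    | false =>
      rw [hL]
      refine ⟨⟨?_, ?_, ?_, ?_⟩, ?_⟩
      · intro y hy
        exact hsubU ⟨lt_trans hc1 hy.1, lt_trans hy.2 (lt_trans hc4 (lt_trans hc5 hc6))⟩
      · rw [hcp]; exact hpB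
      · rw [hcp]; exact hc2
      · rw [hcp]; exact hc3
      · simpa using hc7
    | true =>
      rw [hR]
      refine ⟨⟨?_, hc10, hc11, hc12⟩, ?_⟩
      · intro y hy
        exact hsubU ⟨lt_trans hc1 (lt_trans hc2 (lt_trans hc3 (lt_trans hc4 hy.1))),
          lt_trans hy.2 hc6⟩
      · simpa using hc8

include hUo hBd hFc hFi hroot hrootlen in
lemma cantorTree_concl : ∀ s : List Bool,
    (cantorTree U B F root s).Concl B F s.length
      (cantorTree U B F root (false :: s)) (cantorTree U B F root (true :: s)) := by
  intro s
  have hg := (cantorTree_good hUo hBd hFc hFi hroot hrootlen s).1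
  have h := Classical.choose_spec (cantor_step U B F (cantorTree U B F root s) s.length)
    ⟨hUo, hBd, hFc, hFi, hg⟩
  have hL : cantorTree U B F root (false :: s)
      = (cantorChild U B F (cantorTree U B F root s) s.length).1 := by
    simp [cantorTree]
  have hR : cantorTree U B F root (true :: s)
      = (cantorChild U B F (cantorTree U B F root s) s.length).2 := by
    simp [cantorTree]
  rw [hL, hR]
  exact h



lemma preList_congr {x y : ℕ → Bool} {n : ℕ} (h : ∀ k < n, x k = y k) :
    preList x n = preList y n := by
  induction n with
  | zero => rfl
  | succ n ih =>
    simp only [preList]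
    rw [h n (Nat.lt_succ_self n), ih fun k hk => h k (Nat.lt_succ_of_lt hk)]

noncomputable def cantorF (U B : Set ℝ) (F : ℕ → Set ℝ) (root : CantorNode)
    (x : ℕ → Bool) : ℝ :=
  ⨆ n, (cantorTree U B F root (preList x n)).a

include hUo hBd hFc hFi hroot hrootlen in
lemma cantorTree_lt (s : List Bool) :
    (cantorTree U B F root s).a < (cantorTree U B F root s).b := by
  obtain ⟨⟨_, _, h1, h2⟩, _⟩ := cantorTree_good hUo hBd hFc hFi hroot hrootlen s
  exact lt_trans h1 h2

include hUo hBd hFc hFi hroot hrootlen in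
lemma cantorTree_nest (x : ℕ → Bool) (n : ℕ) :
    Set.Icc (cantorTree U B F root (preList x (n+1))).a
        (cantorTree U B F root (preList x (n+1))).b ⊆
      Set.Ioo (cantorTree U B F root (preList x n)).a
        (cantorTree U B F root (preList x n)).b := by
  have hc := cantorTree_concl hUo hBd hFc hFi hroot hrootlen (preList x n)
  rw [preList_length] at hc
  obtain ⟨hcp, hc1, hc2, hc3, hc4, hc5, hc6, hc7, hc8, hc9, hc10, hc11, hc12⟩ := hc
  have hpre : preList x (n+1) = x n :: preList x n := rfl
  rw [hpre]
  cases hxn : x n with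
  | false => exact Set.Icc_subset_Ioo hc1 (lt_trans hc4 (lt_trans hc5 hc6))
  | true => exact Set.Icc_subset_Ioo (lt_trans hc1 (lt_trans hc2 (lt_trans hc3 hc4))) hc6

include hUo hBd hFc hFi hroot hrootlen in
lemma cantorTree_monoA (x : ℕ → Bool) :
    Monotone (fun n => (cantorTree U B F root (preList x n)).a) ∧
    Antitone (fun n => (cantorTree U B F root (preList x n)).b) := by
  constructor
  · apply monotone_nat_of_le_succ
    intro n
    have h := cantorTree_nest hUo hBd hFc hFi hroot hrootlen x n
    have hlt := cantorTree_lt hUo hBd hFc hFi hroot hrootlen (preList x (n+1))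
    exact le_of_lt (h ⟨le_refl _, le_of_lt hlt⟩).1
  · apply antitone_nat_of_succ_le
    intro n
    have h := cantorTree_nest hUo hBd hFc hFi hroot hrootlen x n
    have hlt := cantorTree_lt hUo hBd hFc hFi hroot hrootlen (preList x (n+1))
    exact le_of_lt (h ⟨le_of_lt hlt, le_refl _⟩).2

include hUo hBd hFc hFi hroot hrootlen in
lemma cantorF_mem (x : ℕ → Bool) (n : ℕ) :
    cantorF U B F root x ∈ Set.Icc (cantorTree U B F root (preList x n)).a
      (cantorTree U B F root (preList x n)).b := by
  obtain ⟨hmono, hanti⟩ := cantorTree_monoA hUo hBd hFc hFi hroot hrootlen x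
  have hbdd : BddAbove (Set.range fun n => (cantorTree U B F root (preList x n)).a) := by
    refine ⟨(cantorTree U B F root (preList x 0)).b, ?_⟩
    rintro y ⟨m, rfl⟩
    exact le_trans (le_of_lt (cantorTree_lt hUo hBd hFc hFi hroot hrootlen _))
      (hanti (Nat.zero_le m))
  constructor
  · exact le_ciSup hbdd n
  · apply ciSup_le
    intro m
    rcases le_total m n with h | h
    · exact le_trans (hmono h) (le_of_lt (cantorTree_lt hUo hBd hFc hFi hroot hrootlen _))
    · exact le_trans (le_of_lt (cantorTree_lt hUo hBd hFc hFi hroot hrootlen _)) (hanti h)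

include hUo hBd hFc hFi hroot hrootlen in
lemma cantorF_dist {x y : ℕ → Bool} {n : ℕ} (h : ∀ k < n, x k = y k) :
    |cantorF U B F root x - cantorF U B F root y| ≤ (1/2) ^ n := by
  have hxy : preList x n = preList y n := preList_congr h
  have hx := cantorF_mem hUo hBd hFc hFi hroot hrootlen x n
  have hy := cantorF_mem hUo hBd hFc hFi hroot hrootlen y n
  rw [hxy] at hx
  have hw := (cantorTree_good hUo hBd hFc hFi hroot hrootlen (preList y n)).2
  rw [preList_length] at hw
  rw [abs_sub_le_iff]
  exact ⟨by linarith [hx.1, hx.2, hy.1, hy.2], by linarith [hx.1, hx.2, hy.1, hy.2]⟩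

include hUo hBd hFc hFi hroot hrootlen in
lemma cantorF_continuous : Continuous (cantorF U B F root) := by
  rw [continuous_iff_continuousAt]
  intro x
  rw [ContinuousAt, Metric.tendsto_nhds]
  intro ε hε
  obtain ⟨n, hn⟩ := exists_pow_lt_of_lt_one hε (by norm_num : (1/2 : ℝ) < 1)
  have hVo : IsOpen {y : ℕ → Bool | ∀ k < n, y k = x k} := by
    have : {y : ℕ → Bool | ∀ k < n, y k = x k}
        = ⋂ k ∈ Finset.range n, (fun y : ℕ → Bool => y k) ⁻¹' {x k} := by
      ext y; simp [Finset.mem_range]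
    rw [this]
    exact isOpen_biInter_finset fun k _ => (continuous_apply k).isOpen_preimage _ trivial
  have hV : {y : ℕ → Bool | ∀ k < n, y k = x k} ∈ 𝓝 x :=
    hVo.mem_nhds (fun k _ => rfl)
  filter_upwards [hV] with y hy
  rw [Real.dist_eq]
  exact lt_of_le_of_lt (cantorF_dist hUo hBd hFc hFi hroot hrootlen hy) hn

include hUo hBd hFc hFi hroot hrootlen in
lemma cantorF_inj : Function.Injective (cantorF U B F root) := by
  intro x y hxy
  by_contra hne
  have hex : ∃ k, x k ≠ y k := by
    by_contra h; push_neg at h; exact hne (funext h)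
  set n := Nat.find hex with hn
  have hmin : ∀ k < n, x k = y k := fun k hk => not_not.mp (Nat.find_min hex hk)
  have hs : preList x n = preList y n := preList_congr hmin
  have hxn : x n ≠ y n := Nat.find_spec hex
  have hc := cantorTree_concl hUo hBd hFc hFi hroot hrootlen (preList x n)
  have hmemx := cantorF_mem hUo hBd hFc hFi hroot hrootlen x (n+1)
  have hmemy := cantorF_mem hUo hBd hFc hFi hroot hrootlen y (n+1)
  have hprex : preList x (n+1) = x n :: preList x n := rfl
  have hprey : preList y (n+1) = y n :: preList x n := by rw [hs]; rfl
  have hdisj := hc.2.2.2.2.1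
  cases hx : x n with
  | false =>
    have hy : y n = true := by
      cases hyn : y n with
      | false => rw [hx, hyn] at hxn; exact absurd rfl hxn
      | true => rfl
    rw [hprex, hx] at hmemx
    rw [hprey, hy] at hmemy
    exact absurd hxy (ne_of_lt (lt_of_le_of_lt hmemx.2 (lt_of_lt_of_le hdisj hmemy.1)))
  | true =>
    have hy : y n = false := by
      cases hyn : y n with
      | true => rw [hx, hyn] at hxn; exact absurd rfl hxn
      | false => rfl
    rw [hprex, hx] at hmemx
    rw [hprey, hy] at hmemy
    exact absurd hxy.symm (ne_of_lt (lt_of_le_of_lt hmemy.2 (lt_of_lt_of_le hdisj hmemx.1)))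

include hUo hBd hFc hFi hroot hrootlen in
lemma cantorF_mem_B {x : ℕ → Bool} (N : ℕ) (h : ∀ n ≥ N, x n = false) :
    cantorF U B F root x ∈ B := by
  have hp : ∀ n ≥ N, (cantorTree U B F root (preList x n)).p
      = (cantorTree U B F root (preList x N)).p := by
    intro n hn
    induction n, hn using Nat.le_induction with
    | base => rfl
    | succ n hn ih =>
      have hc := cantorTree_concl hUo hBd hFc hFi hroot hrootlen (preList x n)
      have hpre : preList x (n+1) = x n :: preList x n := rfl
      rw [hpre, h n hn, hc.1, ih]
  have hqB : (cantorTree U B F root (preList x N)).p ∈ B :=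
    (cantorTree_good hUo hBd hFc hFi hroot hrootlen (preList x N)).1.2.1
  have key : ∀ n ≥ N, |cantorF U B F root x - (cantorTree U B F root (preList x N)).p|
      ≤ (1/2) ^ n := by
    intro n hn
    have hg := (cantorTree_good hUo hBd hFc hFi hroot hrootlen (preList x n)).1
    have hqmem : (cantorTree U B F root (preList x N)).p
        ∈ Set.Icc (cantorTree U B F root (preList x n)).a
        (cantorTree U B F root (preList x n)).b := by
      rw [← hp n hn]
      exact ⟨le_of_lt hg.2.2.1, le_of_lt hg.2.2.2⟩
    have hfm := cantorF_mem hUo hBd hFc hFi hroot hrootlen x n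
    have hw := (cantorTree_good hUo hBd hFc hFi hroot hrootlen (preList x n)).2
    rw [preList_length] at hw
    rw [abs_sub_le_iff]
    exact ⟨by linarith [hfm.1, hfm.2, hqmem.1, hqmem.2],
      by linarith [hfm.1, hfm.2, hqmem.1, hqmem.2]⟩
  have : cantorF U B F root x = (cantorTree U B F root (preList x N)).p := by
    by_contra hne
    have hpos : 0 < |cantorF U B F root x - (cantorTree U B F root (preList x N)).p| :=
      abs_pos.mpr (sub_ne_zero.mpr hne)
    obtain ⟨n0, hn0⟩ := exists_pow_lt_of_lt_one hpos (by norm_num : (1/2 : ℝ) < 1)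
    have h1 := key (max N n0) (le_max_left _ _)
    have h2 : ((1:ℝ)/2) ^ (max N n0) ≤ (1/2) ^ n0 :=
      pow_le_pow_of_le_one (by norm_num) (by norm_num) (le_max_right _ _)
    linarith
  rw [this]; exact hqB

include hUo hBd hFc hFi hroot hrootlen in
lemma cantorF_avoid {x : ℕ → Bool} (h : ∀ N, ∃ n, N ≤ n ∧ x n = true) (k : ℕ) :
    cantorF U B F root x ∉ F k := by
  obtain ⟨n, hkn, hxn⟩ := h k
  have hc := cantorTree_concl hUo hBd hFc hFi hroot hrootlen (preList x n)
  rw [preList_length] at hc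
  have havoid := hc.2.2.2.2.2.2.2.2.2.1
  have hmem := cantorF_mem hUo hBd hFc hFi hroot hrootlen x (n+1)
  have hpre : preList x (n+1) = x n :: preList x n := rfl
  rw [hpre, hxn] at hmem
  intro hFk
  have : cantorF U B F root x ∈ (Set.Icc (cantorTree U B F root (true :: preList x n)).a
      (cantorTree U B F root (true :: preList x n)).b) ∩ F k := ⟨hmem, hFk⟩
  rw [havoid k hkn] at this
  exact this

include hUo hBd hFc hFi hroot hrootlen in
lemma cantorF_mem_U (x : ℕ → Bool) : cantorF U B F root x ∈ U := by
  have hmem := cantorF_mem hUo hBd hFc hFi hroot hrootlen x 1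
  have hnest := cantorTree_nest hUo hBd hFc hFi hroot hrootlen x 0
  have : cantorF U B F root x ∈ Set.Ioo (cantorTree U B F root (preList x 0)).a
      (cantorTree U B F root (preList x 0)).b := hnest hmem
  exact hroot.1 this

include hUo hBd hFc hFi hroot hrootlen in
lemma cantorF_dense (x : ℕ → Bool) :
    cantorF U B F root x ∈ closure (B ∩ Set.range (cantorF U B F root)) := by
  rw [Metric.mem_closure_iff]
  intro ε hε
  obtain ⟨n, hn⟩ := exists_pow_lt_of_lt_one hε (by norm_num : (1/2 : ℝ) < 1)
  set y : ℕ → Bool := fun k => if k < n then x k else false with hy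
  refine ⟨cantorF U B F root y, ⟨?_, Set.mem_range_self y⟩, ?_⟩
  · exact cantorF_mem_B hUo hBd hFc hFi hroot hrootlen n
      (fun m hm => by simp [hy, Nat.not_lt.mpr hm])
  · rw [Real.dist_eq]
    refine lt_of_le_of_lt (cantorF_dist hUo hBd hFc hFi hroot hrootlen ?_) hn
    intro k hk
    simp [hy, hk]

end

lemma cantor_construction {U B : Set ℝ} {F : ℕ → Set ℝ} (hUo : IsOpen U)
    (hUne : U.Nonempty) (hBd : U ⊆ closure B) (hFc : ∀ m, IsClosed (F m))
    (hFi : ∀ m, interior (F m) = ∅) :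
    ∃ f : (ℕ → Bool) → ℝ, Continuous f ∧ Function.Injective f ∧
      (∀ x, f x ∈ B ∨ (f x ∈ U ∧ ∀ k, f x ∉ F k)) ∧
      (∀ x, f x ∈ closure (B ∩ Set.range f)) := by
  obtain ⟨u, hu⟩ := hUne
  obtain ⟨r, hr, hball⟩ := Metric.isOpen_iff.mp hUo u hu
  set t : ℝ := min (r/2) (1/2) with ht
  have ht0 : 0 < t := lt_min (by linarith) (by norm_num)
  have hIoo : Set.Ioo (u - t/2) (u + t/2) ⊆ U := by
    intro y hy
    apply hball
    rw [Metric.mem_ball, Real.dist_eq, abs_sub_lt_iff]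
    have h1 : t ≤ r/2 := min_le_left _ _
    exact ⟨by linarith [hy.1, hy.2], by linarith [hy.1, hy.2]⟩
  have humem : u ∈ Set.Ioo (u - t/2) (u + t/2) := ⟨by linarith, by linarith⟩
  obtain ⟨p, hpI, hpB⟩ := _root_.mem_closure_iff.mp (hBd hu) _ isOpen_Ioo humem
  have hroot : CantorNode.Good U B ⟨u - t/2, u + t/2, p⟩ := ⟨hIoo, hpB, hpI.1, hpI.2⟩
  have hrootlen : (⟨u - t/2, u + t/2, p⟩ : CantorNode).b
      - (⟨u - t/2, u + t/2, p⟩ : CantorNode).a ≤ 1 := by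
    have h1 : t ≤ 1/2 := min_le_right _ _
    show u + t/2 - (u - t/2) ≤ 1
    linarith
  refine ⟨cantorF U B F ⟨u - t/2, u + t/2, p⟩,
    cantorF_continuous hUo hBd hFc hFi hroot hrootlen,
    cantorF_inj hUo hBd hFc hFi hroot hrootlen, ?_,
    cantorF_dense hUo hBd hFc hFi hroot hrootlen⟩
  intro x
  by_cases hev : ∃ N, ∀ n ≥ N, x n = false
  · obtain ⟨N, hN⟩ := hev
    exact Or.inl (cantorF_mem_B hUo hBd hFc hFi hroot hrootlen N hN)
  · push_neg at hev
    refine Or.inr ⟨cantorF_mem_U hUo hBd hFc hFi hroot hrootlen x,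
      fun k => cantorF_avoid hUo hBd hFc hFi hroot hrootlen (fun N => ?_) k⟩
    obtain ⟨n, hn1, hn2⟩ := hev N
    exact ⟨n, hn1, by simpa using hn2⟩


lemma meagre_cover {M : Set ℝ} (hM : IsMeagre M) :
    ∃ F : ℕ → Set ℝ, (∀ n, IsClosed (F n)) ∧ (∀ n, interior (F n) = ∅) ∧ M ⊆ ⋃ n, F n := by
  obtain ⟨S, hnwd, hSc, hsub⟩ := isMeagre_iff_countable_union_isNowhereDense.mp hM
  obtain ⟨f, hf⟩ := (Set.Countable.insert ∅ (hSc.image closure)).exists_eq_range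
    (insert_nonempty _ _)
  refine ⟨f, ?_, ?_, ?_⟩
  · intro n
    have : f n ∈ insert ∅ (closure '' S) := hf ▸ mem_range_self n
    rcases this with h | ⟨t, _, ht⟩
    · simp [h]
    · exact ht ▸ isClosed_closure
  · intro n
    have : f n ∈ insert ∅ (closure '' S) := hf ▸ mem_range_self n
    rcases this with h | ⟨t, htS, ht⟩
    · simp [h]
    · have := (hnwd t htS).closure
      rw [IsNowhereDense, closure_closure] at this
      exact ht ▸ this
  · intro x hx
    obtain ⟨t, htS, hxt⟩ := hsub hx
    have : closure t ∈ insert ∅ (closure '' S) := Or.inr (mem_image_of_mem _ htS)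
    rw [hf] at this
    obtain ⟨n, hn⟩ := this
    exact mem_iUnion.mpr ⟨n, hn ▸ subset_closure hxt⟩



lemma pi_bool_interior_singleton (z : ℕ → Bool) : interior {z} = ∅ := by
  rw [eq_empty_iff_forall_notMem]
  intro w hw
  have hwz : w = z := by have := interior_subset hw; simpa using this
  subst hwz
  have hnhds : {w} ∈ 𝓝 w := mem_interior_iff_mem_nhds.mp hw
  set g : ℕ → (ℕ → Bool) := fun n k => if k = n then !(w k) else w k with hg
  have htend : Tendsto g atTop (𝓝 w) := by
    rw [tendsto_pi_nhds]
    intro k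
    apply Tendsto.congr' _ tendsto_const_nhds
    filter_upwards [eventually_gt_atTop k] with n hn
    simp [hg, Nat.ne_of_lt hn]
  have hev : ∀ᶠ n in atTop, g n ∈ ({w} : Set (ℕ → Bool)) := htend.eventually_mem hnhds
  obtain ⟨n, hgn⟩ := hev.exists
  have h1 : g n n = w n := congrFun hgn n
  simp [hg] at h1

/-- Suppose `A ⊆ ℝ` has the Baire property. Then `A` is meager if and only if for every
nonempty open `U ⊆ ℝ` there is a countable dense subset `B` of `U` such that there is no
Cantor set `C ⊆ A ∪ B` with `B ∩ C` dense in `C`. -/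
theorem meagre_iff_no_cantor_subset_witness
    (A : Set ℝ)
    (hBaire : ∃ U M : Set ℝ, IsOpen U ∧ IsMeagre M ∧ A = symmDiff U M) :
    IsMeagre A ↔
      ∀ U : Set ℝ, IsOpen U → U.Nonempty →
        ∃ B : Set ℝ, B ⊆ U ∧ B.Countable ∧ U ⊆ closure B ∧
          ¬∃ C : Set ℝ, C ⊆ A ∪ B ∧ Nonempty (C ≃ₜ (ℕ → Bool)) ∧
            C ⊆ closure (B ∩ C) := by
  constructor
  · -- forward direction
    intro hA U hUo hUne
    obtain ⟨F, hFc, hFi, hAF⟩ := meagre_cover hA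
    have hDc : Dense (⋂ n, (F n)ᶜ) :=
      dense_iInter_of_isOpen (fun n => (hFc n).isOpen_compl)
        (fun n => by rw [← interior_eq_empty_iff_dense_compl]; exact hFi n)
    set W : Set ℝ := U ∩ ⋂ n, (F n)ᶜ with hW
    obtain ⟨tB, htBc, htBd⟩ := TopologicalSpace.exists_countable_dense (↥W)
    set B : Set ℝ := Subtype.val '' tB with hBdef
    have hBW : B ⊆ W := by
      rintro b ⟨⟨b', hb'⟩, _, rfl⟩; exact hb'
    have hBU : B ⊆ U := fun b hb => (hBW hb).1
    have hBc : B.Countable := htBc.image _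
    have hWB : W ⊆ closure B := by
      intro w hw
      have h1 : (⟨w, hw⟩ : ↥W) ∈ closure tB := htBd _
      exact closure_subtype.mp h1
    have hUB : U ⊆ closure B := by
      intro u hu
      have h1 : U ⊆ closure W := hDc.open_subset_closure_inter hUo
      have h2 := closure_mono hWB (h1 hu)
      rwa [closure_closure] at h2
    refine ⟨B, hBU, hBc, hUB, ?_⟩
    rintro ⟨C, hCsub, ⟨e⟩, hCd⟩
    set g : (ℕ → Bool) → ℝ := fun z => ((e.symm z : C) : ℝ) with hgdef
    have hgc : Continuous g := continuous_subtype_val.comp e.symm.continuous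
    have hginj : Function.Injective g := Subtype.val_injective.comp e.symm.injective
    have hgC : ∀ z, g z ∈ C := fun z => (e.symm z).2
    -- each pulled-back F n has empty interior
    have hGi : ∀ n, interior (g ⁻¹' (F n)) = ∅ := by
      intro n
      rw [eq_empty_iff_forall_notMem]
      intro z hz
      have hnh : g ⁻¹' (F n) ∈ 𝓝 z := mem_interior_iff_mem_nhds.mp hz
      have h2 : (⇑e) ⁻¹' (g ⁻¹' (F n)) ∈ 𝓝 (e.symm z) := by
        have hca : ContinuousAt (⇑e) (e.symm z) := e.continuous.continuousAt
        exact hca (by rwa [Homeomorph.apply_symm_apply])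
      have heq : (⇑e) ⁻¹' (g ⁻¹' (F n)) = Subtype.val ⁻¹' (F n) := by
        ext y
        simp [hgdef]
      rw [heq, mem_nhds_subtype] at h2
      obtain ⟨t, ht1, ht2⟩ := h2
      have hcd : g z ∈ closure (B ∩ C) := hCd (hgC z)
      obtain ⟨b, hbt, hbB, hbC⟩ := mem_closure_iff_nhds.mp hcd t ht1
      have hbF : b ∈ F n := ht2 (show (⟨b, hbC⟩ : C) ∈ Subtype.val ⁻¹' t from hbt)
      have hbW := (hBW hbB).2
      rw [mem_iInter] at hbW
      exact hbW n hbF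
    have hgBc : (g ⁻¹' B).Countable := hBc.preimage hginj
    have hcover : ∀ z : ℕ → Bool, (∃ n, z ∈ g ⁻¹' (F n)) ∨ z ∈ g ⁻¹' B := by
      intro z
      rcases hCsub (hgC z) with hzA | hzB
      · left
        obtain ⟨s, hs1, hs2⟩ := hAF hzA
        obtain ⟨n, rfl⟩ := hs1
        exact ⟨n, hs2⟩
      · right; exact hzB
    haveI : Countable ↥(g ⁻¹' B) := hgBc.to_subtype
    set fam : ℕ ⊕ ↥(g ⁻¹' B) → Set (ℕ → Bool) :=
      Sum.elim (fun n => (g ⁻¹' (F n))ᶜ) (fun b => ({(b : ℕ → Bool)}ᶜ)) with hfam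
    have hfo : ∀ i, IsOpen (fam i) := by
      rintro (n | b)
      · exact ((hFc n).preimage hgc).isOpen_compl
      · exact isClosed_singleton.isOpen_compl
    have hfd : ∀ i, Dense (fam i) := by
      rintro (n | b)
      · rw [hfam]
        simp only [Sum.elim_inl]
        rw [← interior_eq_empty_iff_dense_compl]
        exact hGi n
      · rw [hfam]
        simp only [Sum.elim_inr]
        rw [← interior_eq_empty_iff_dense_compl]
        exact pi_bool_interior_singleton _
    obtain ⟨z, hz⟩ := (dense_iInter_of_isOpen hfo hfd).nonempty
    rw [mem_iInter] at hz
    rcases hcover z with ⟨n, hn⟩ | h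
    · exact hz (Sum.inl n) hn
    · exact hz (Sum.inr ⟨z, h⟩) rfl
  · -- backward direction
    intro h
    by_contra hA
    obtain ⟨V, M, hVo, hM, hAVM⟩ := hBaire
    have hVne : V.Nonempty := by
      rcases V.eq_empty_or_nonempty with rfl | hVne
      · exfalso
        apply hA
        rw [hAVM]
        have he : symmDiff (∅ : Set ℝ) M = M := by simp
        rw [he]
        exact hM
      · exact hVne
    obtain ⟨B, hBU, hBc, hBd, hnC⟩ := h V hVo hVne
    have hVA : V \ A ⊆ M := by
      rintro x ⟨hxV, hxA⟩
      by_contra hxM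
      rw [hAVM] at hxA
      exact hxA (Set.mem_symmDiff.mpr (Or.inl ⟨hxV, hxM⟩))
    obtain ⟨F, hFc, hFi, hMF⟩ := meagre_cover (hM.mono hVA)
    obtain ⟨f, hfc, hfinj, hfmem, hfd⟩ := cantor_construction hVo hVne hBd hFc hFi
    apply hnC
    refine ⟨Set.range f, ?_, ?_, ?_⟩
    · rintro c ⟨x, rfl⟩
      rcases hfmem x with hB | ⟨hU, hF⟩
      · exact Or.inr hB
      · left
        by_contra hfA
        obtain ⟨s, hs1, hs2⟩ := hMF ⟨hU, hfA⟩
        obtain ⟨n, rfl⟩ := hs1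
        exact hF n hs2
    · have hcont : Continuous (Equiv.ofInjective f hfinj) := hfc.subtype_mk _
      exact ⟨(hcont.homeoOfEquivCompactToT2).symm⟩
    · rintro c ⟨x, rfl⟩
      exact hfd x
end
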